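/- Let A ∈ ℝ^{m×n} and let S ∈ ℝ^{m×m}, T ∈ ℝ^{n×n} be symmetric positive definite. Then there exist U ∈ ℝ^{m×m} with U^T S U = I and V ∈ ℝ^{n×n} with V^T T V = I, and a diagonal matrix Σ ∈ ℝ^{m×n} with nonnegative decreasing diagonal entries, such that A = U Σ V^T T. -/

import Mathlib

open Matrix MeasureTheory ProbabilityTheory

noncomputable def spec {m n : ℕ} (A : Matrix (Fin m) (Fin n) ℝ) : ℝ :=
  ‖LinearMap.toContinuousLinearMap (Matrix.toEuclideanLin A)‖

noncomputable def eigDesc {n : ℕ} {M : Matrix (Fin n) (Fin n) ℝ} (hM : M.IsHermitian)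
    (j : Fin n) : ℝ :=
  hM.eigenvalues (Tuple.sort hM.eigenvalues j.rev)

noncomputable def svDesc {m n : ℕ} (A : Matrix (Fin m) (Fin n) ℝ) (j : Fin n) : ℝ :=
  Real.sqrt (eigDesc (show (Aᵀ * A).IsHermitian by
    rw [IsHermitian, conjTranspose_eq_transpose_of_trivial, transpose_mul, transpose_transpose]) j)

noncomputable def sqrtM {n : ℕ} {M : Matrix (Fin n) (Fin n) ℝ} (hM : M.PosDef) :
    Matrix (Fin n) (Fin n) ℝ :=
  (hM.posSemidef.1.eigenvectorUnitary : Matrix (Fin n) (Fin n) ℝ) *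
    diagonal ((RCLike.ofReal : ℝ → ℝ) ∘ Real.sqrt ∘ hM.posSemidef.1.eigenvalues) *
    (star hM.posSemidef.1.eigenvectorUnitary : Matrix (Fin n) (Fin n) ℝ)

def IsMoorePenrose {m n : ℕ} (A : Matrix (Fin m) (Fin n) ℝ)
    (B : Matrix (Fin n) (Fin m) ℝ) : Prop :=
  A * B * A = A ∧ B * A * B = B ∧ (A * B)ᵀ = A * B ∧ (B * A)ᵀ = B * A

lemma real_svd {m n : ℕ} (B : Matrix (Fin m) (Fin n) ℝ) :
    ∃ (P : Matrix (Fin m) (Fin m) ℝ) (Q : Matrix (Fin n) (Fin n) ℝ) (σ : ℕ → ℝ),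
      Pᵀ * P = 1 ∧ Qᵀ * Q = 1 ∧ Q * Qᵀ = 1 ∧ Antitone σ ∧ (∀ i, 0 ≤ σ i) ∧
      B = P * (Matrix.of fun (i : Fin m) (j : Fin n) =>
              if (i : ℕ) = (j : ℕ) then σ (i : ℕ) else 0) * Qᵀ := by
  classical
  set H := Bᵀ * B with hHdef
  have hH : H.IsHermitian := Matrix.isHermitian_conjTranspose_mul_self B
  have hHpsd : H.PosSemidef := by
    have := Matrix.posSemidef_conjTranspose_mul_self B
    rwa [Matrix.conjTranspose_eq_transpose_of_trivial] at this
  set ev0 := hH.eigenvalues with hev0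
  set Q0 := (hH.eigenvectorUnitary : Matrix (Fin n) (Fin n) ℝ) with hQ0def
  have hQ0star : star Q0 = Q0ᵀ := Matrix.conjTranspose_eq_transpose_of_trivial Q0
  have hQ0l : Q0ᵀ * Q0 = 1 := by
    rw [← hQ0star]; exact Matrix.mem_unitaryGroup_iff'.mp hH.eigenvectorUnitary.2
  have hQ0r : Q0 * Q0ᵀ = 1 := by
    rw [← hQ0star]; exact Matrix.mem_unitaryGroup_iff.mp hH.eigenvectorUnitary.2
  have hspec : H * Q0 = Q0 * Matrix.diagonal ev0 := by
    have h := hH.spectral_theorem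
    have : (RCLike.ofReal ∘ ev0 : Fin n → ℝ) = ev0 := by ext i; simp
    rw [this, Unitary.conjStarAlgAut_apply, ← hQ0def, hQ0star] at h
    rw [h, Matrix.mul_assoc, Matrix.mul_assoc, hQ0l, Matrix.mul_one]
  set gE : Equiv.Perm (Fin n) := Fin.revPerm.trans (Tuple.sort ev0) with hgE
  set lam : Fin n → ℝ := fun j => ev0 (gE j) with hlam
  have lam_anti : Antitone lam := by
    intro j k hjk
    exact Tuple.monotone_sort ev0 (Fin.rev_le_rev.mpr hjk)
  have lam_nonneg : ∀ j, 0 ≤ lam j := fun j => hHpsd.eigenvalues_nonneg _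
  set Q : Matrix (Fin n) (Fin n) ℝ := Matrix.of fun i j => Q0 i (gE j) with hQdef
  have hQtQ : Qᵀ * Q = 1 := by
    ext i j
    have h := Matrix.ext_iff.mpr hQ0l (gE i) (gE j)
    simp only [Matrix.mul_apply, Matrix.transpose_apply] at h ⊢
    simp only [hQdef, Matrix.of_apply]
    rw [h, Matrix.one_apply, Matrix.one_apply]
    by_cases hij : i = j
    · simp [hij]
    · rw [if_neg (fun hc => hij (gE.injective hc)), if_neg hij]
  have hQQt : Q * Qᵀ = 1 := mul_eq_one_comm.mp hQtQ
  have hHQ : H * Q = Q * Matrix.diagonal lam := by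
    ext i j
    have lhs : (H * Q) i j = (H * Q0) i (gE j) := by
      simp [Matrix.mul_apply, hQdef]
    have rhs : (Q * Matrix.diagonal lam) i j = (Q0 * Matrix.diagonal ev0) i (gE j) := by
      simp [Matrix.mul_diagonal, hQdef, hlam]
    rw [lhs, rhs, hspec]
  set C := B * Q with hCdef
  have hCtC : Cᵀ * C = Matrix.diagonal lam := by
    calc Cᵀ * C = Qᵀ * (H * Q) := by
          rw [hCdef, Matrix.transpose_mul, hHdef]
          simp [Matrix.mul_assoc]
      _ = Qᵀ * Q * Matrix.diagonal lam := by rw [hHQ, Matrix.mul_assoc]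
      _ = Matrix.diagonal lam := by rw [hQtQ, Matrix.one_mul]
  have hcol : ∀ j k : Fin n, ∑ i, C i j * C i k = Matrix.diagonal lam j k := by
    intro j k
    have h := Matrix.ext_iff.mpr hCtC j k
    simpa [Matrix.mul_apply, Matrix.transpose_apply] using h
  have hzero : ∀ j : Fin n, lam j = 0 → ∀ i, C i j = 0 := by
    intro j hj i
    have h := hcol j j
    rw [Matrix.diagonal_apply_eq, hj] at h
    have := (Finset.sum_eq_zero_iff_of_nonneg
      (fun i _ => mul_self_nonneg (C i j))).mp h i (Finset.mem_univ i)
    exact (mul_self_eq_zero).mp this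
  -- cardinality bound
  have hlt : ∀ j : Fin n, 0 < lam j → (j : ℕ) < m := by
    intro j hj
    set t : Finset (Fin n) := Finset.univ.filter (fun j => 0 < lam j) with ht
    have htcard : t.card ≤ m := by
      have h1 : H.rank = B.rank := Matrix.rank_transpose_mul_self B
      have h2 : B.rank ≤ m := Matrix.rank_le_height B
      have h3 : H.rank = Fintype.card {i // ev0 i ≠ 0} := hH.rank_eq_card_non_zero_eigs
      have e : {j : Fin n // 0 < lam j} ≃ {i : Fin n // ev0 i ≠ 0} :=
        gE.subtypeEquiv (fun j => by
          constructor
          · intro h; exact ne_of_gt h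
          · intro h; exact lt_of_le_of_ne (lam_nonneg j) (Ne.symm h))
      have h4 : t.card = Fintype.card {j : Fin n // 0 < lam j} := by
        rw [Fintype.card_subtype]
      rw [h4, Fintype.card_congr e, ← h3, h1]
      exact h2
    have hsub : Finset.Iic j ⊆ t := by
      intro i hi
      rw [ht, Finset.mem_filter]
      exact ⟨Finset.mem_univ i, lt_of_lt_of_le hj (lam_anti (Finset.mem_Iic.mp hi))⟩
    have := Finset.card_le_card hsub
    rw [Fin.card_Iic] at this
    omega
  -- the singular values
  set σ : ℕ → ℝ := fun k => if h : k < n then Real.sqrt (lam ⟨k, h⟩) else 0 with hσ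
  have σ_nonneg : ∀ k, 0 ≤ σ k := by
    intro k; rw [hσ]; dsimp only
    split
    · exact Real.sqrt_nonneg _
    · exact le_refl 0
  have σ_anti : Antitone σ := by
    intro k l hkl
    rw [hσ]; dsimp only
    split <;> split
    all_goals first
      | omega
      | exact le_refl 0
      | exact Real.sqrt_nonneg _
      | exact Real.sqrt_le_sqrt (lam_anti (Fin.mk_le_mk.mpr hkl))
  have σ_fin : ∀ j : Fin n, σ (j : ℕ) = Real.sqrt (lam j) := by
    intro j; rw [hσ]; dsimp only; rw [dif_pos j.isLt]
  -- orthonormal columns of C, normalized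
  set v : Fin m → EuclideanSpace ℝ (Fin m) := fun i =>
    if h : (i : ℕ) < n then
      (Real.sqrt (lam ⟨(i : ℕ), h⟩))⁻¹ •
        ((WithLp.equiv 2 _).symm (fun k => C k ⟨(i : ℕ), h⟩))
    else 0 with hvdef
  set s : Set (Fin m) := {i | ∃ h : (i : ℕ) < n, 0 < lam ⟨(i : ℕ), h⟩} with hsdef
  have hinner : ∀ (j k : Fin n),
      (inner ℝ ((WithLp.equiv 2 (Fin m → ℝ)).symm (fun i => C i j))
        ((WithLp.equiv 2 (Fin m → ℝ)).symm (fun i => C i k)) : ℝ) = Matrix.diagonal lam j k := by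
    intro j k
    rw [← hcol j k]
    simp [PiLp.inner_apply, RCLike.inner_apply, WithLp.equiv_symm_apply, mul_comm]
  have hvon : Orthonormal ℝ (s.restrict v) := by
    rw [orthonormal_iff_ite]
    rintro ⟨i, hi⟩ ⟨j, hj⟩
    obtain ⟨hin, hipos⟩ := hi
    obtain ⟨hjn, hjpos⟩ := hj
    simp only [Set.restrict, Set.domRestrict_apply, hvdef]
    rw [dif_pos hin, dif_pos hjn, real_inner_smul_left, real_inner_smul_right,
      hinner ⟨(i : ℕ), hin⟩ ⟨(j : ℕ), hjn⟩]
    by_cases hij : i = j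
    · subst hij
      rw [Matrix.diagonal_apply_eq, if_pos rfl]
      have h1 : Real.sqrt (lam ⟨(i : ℕ), hin⟩) ≠ 0 := by
        rw [Real.sqrt_ne_zero']
        exact hipos
      rw [← Real.mul_self_sqrt (le_of_lt hipos)]
      field_simp
      rw [Real.sqrt_sq (Real.sqrt_nonneg _)]
    · have hne : (⟨(i : ℕ), hin⟩ : Fin n) ≠ ⟨(j : ℕ), hjn⟩ := by
        intro hc
        have hval : (i : ℕ) = (j : ℕ) := by simpa using hc
        exact hij (Fin.ext hval)
      rw [Matrix.diagonal_apply_ne _ hne, if_neg (by simpa [Subtype.ext_iff] using hij)]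
      ring
  obtain ⟨b, hb⟩ := hvon.exists_orthonormalBasis_extension_of_card_eq
    (by simp [finrank_euclideanSpace])
  set P : Matrix (Fin m) (Fin m) ℝ := Matrix.of fun i k => b k i with hPdef
  have hPtP : Pᵀ * P = 1 := by
    ext i j
    have h := orthonormal_iff_ite.mp b.orthonormal i j
    simp only [PiLp.inner_apply, RCLike.inner_apply, starRingEnd_apply, star_trivial] at h
    simp only [Matrix.mul_apply, Matrix.transpose_apply, hPdef, Matrix.of_apply,
      Matrix.one_apply]
    rw [← h]; exact Finset.sum_congr rfl fun _ _ => mul_comm _ _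
  have key : B * Q = P * (Matrix.of fun (i : Fin m) (j : Fin n) =>
      if (i : ℕ) = (j : ℕ) then σ (i : ℕ) else 0) := by
    ext i j
    rw [← hCdef]
    have rhs : (P * (Matrix.of fun (i : Fin m) (j : Fin n) =>
        if (i : ℕ) = (j : ℕ) then σ (i : ℕ) else 0)) i j
        = ∑ k, b k i * (if (k : ℕ) = (j : ℕ) then σ (k : ℕ) else 0) := by
      simp [Matrix.mul_apply, hPdef]
    rw [rhs]
    by_cases hjm : (j : ℕ) < m
    · have hcond : ∀ k : Fin m, ((k : ℕ) = (j : ℕ)) ↔ (k = ⟨(j : ℕ), hjm⟩) := by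
        intro k; constructor
        · intro h; exact Fin.ext h
        · intro h; rw [h]
      have hsum : (∑ k : Fin m, b k i * if (k : ℕ) = (j : ℕ) then σ (k : ℕ) else 0)
          = b ⟨(j : ℕ), hjm⟩ i * σ (j : ℕ) := by
        rw [Finset.sum_eq_single (⟨(j : ℕ), hjm⟩ : Fin m)]
        · simp
        · intro k _ hk
          rw [if_neg (fun hc => hk ((hcond k).mp hc)), mul_zero]
        · intro h; exact absurd (Finset.mem_univ _) h
      rw [hsum]
      by_cases hpos : 0 < lam j
      · have hmem : (⟨(j : ℕ), hjm⟩ : Fin m) ∈ s := by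
          refine ⟨j.isLt, ?_⟩
          simpa [Fin.eta] using hpos
        rw [hb _ hmem, hvdef]
        simp only [dif_pos j.isLt]
        rw [σ_fin]
        have heta : (⟨((⟨(j : ℕ), hjm⟩ : Fin m) : ℕ), j.isLt⟩ : Fin n) = j := by
          apply Fin.ext; rfl
        rw [heta] at *
        have h1 : Real.sqrt (lam j) ≠ 0 := by rw [Real.sqrt_ne_zero']; exact hpos
        simp only [PiLp.smul_apply, WithLp.equiv_symm_apply, PiLp.toLp_apply, smul_eq_mul]
        field_simp
      · have hl0 : lam j = 0 := le_antisymm (not_lt.mp hpos) (lam_nonneg j)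
        rw [hzero j hl0 i, σ_fin, hl0, Real.sqrt_zero, mul_zero]
    · have hl0 : lam j = 0 := by
        by_contra hc
        exact hjm (hlt j (lt_of_le_of_ne (lam_nonneg j) (Ne.symm hc)))
      rw [hzero j hl0 i]
      refine (Finset.sum_eq_zero ?_).symm
      intro k _
      rw [if_neg (by omega), mul_zero]
  refine ⟨P, Q, σ, hPtP, hQtQ, hQQt, σ_anti, σ_nonneg, ?_⟩
  calc B = B * (Q * Qᵀ) := by rw [hQQt, Matrix.mul_one]
    _ = (B * Q) * Qᵀ := by rw [Matrix.mul_assoc]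
    _ = _ := by rw [key]

/-- existence of the (S,T)-GSVD: $A = U\Sigma V^T T$ with $U^TSU=I$,
$V^TTV=I$ and $\Sigma$ diagonal with nonnegative decreasing diagonal entries. -/
theorem stmt2 {m n : ℕ} (A : Matrix (Fin m) (Fin n) ℝ)
    (S : Matrix (Fin m) (Fin m) ℝ) (T : Matrix (Fin n) (Fin n) ℝ)
    (hS : S.PosDef) (hT : T.PosDef) :
    ∃ (U : Matrix (Fin m) (Fin m) ℝ) (V : Matrix (Fin n) (Fin n) ℝ) (σ : ℕ → ℝ),
      Uᵀ * S * U = 1 ∧ Vᵀ * T * V = 1 ∧ Antitone σ ∧ (∀ i, 0 ≤ σ i) ∧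
      A = U * (Matrix.of fun (i : Fin m) (j : Fin n) =>
              if (i : ℕ) = (j : ℕ) then σ i else 0) * Vᵀ * T := by
  classical
  set W := (open scoped MatrixOrder in CFC.sqrt S) with hW
  set X := (open scoped MatrixOrder in CFC.sqrt T) with hX
  have hWsym : Wᵀ = W := by
    have h2 := (open scoped MatrixOrder in (CFC.sqrt_nonneg S).posSemidef).1.eq
    rwa [Matrix.conjTranspose_eq_transpose_of_trivial] at h2
  have hXsym : Xᵀ = X := by
    have h2 := (open scoped MatrixOrder in (CFC.sqrt_nonneg T).posSemidef).1.eq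
    rwa [Matrix.conjTranspose_eq_transpose_of_trivial] at h2
  have hWW : W * W = S := open scoped MatrixOrder in CFC.sqrt_mul_sqrt_self S hS.posSemidef.nonneg
  have hXX : X * X = T := open scoped MatrixOrder in CFC.sqrt_mul_sqrt_self T hT.posSemidef.nonneg
  have hWdet : IsUnit W.det := by
    apply isUnit_iff_ne_zero.mpr
    intro h0
    have h : W.det * W.det = S.det := by rw [← Matrix.det_mul, hWW]
    rw [h0, mul_zero] at h
    exact (ne_of_gt hS.det_pos) h.symm
  have hXdet : IsUnit X.det := by
    apply isUnit_iff_ne_zero.mpr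
    intro h0
    have h : X.det * X.det = T.det := by rw [← Matrix.det_mul, hXX]
    rw [h0, mul_zero] at h
    exact (ne_of_gt hT.det_pos) h.symm
  have hWl : W⁻¹ * W = 1 := Matrix.nonsing_inv_mul W hWdet
  have hWr : W * W⁻¹ = 1 := Matrix.mul_nonsing_inv W hWdet
  have hXl : X⁻¹ * X = 1 := Matrix.nonsing_inv_mul X hXdet
  have hXr : X * X⁻¹ = 1 := Matrix.mul_nonsing_inv X hXdet
  have hWinvT : (W⁻¹)ᵀ = W⁻¹ := by rw [Matrix.transpose_nonsing_inv, hWsym]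
  have hXinvT : (X⁻¹)ᵀ = X⁻¹ := by rw [Matrix.transpose_nonsing_inv, hXsym]
  obtain ⟨P, Q, σ, hPtP, hQtQ, hQQt, hσa, hσn, hB⟩ := real_svd (W * A * X⁻¹)
  have hmidW : W⁻¹ * S * W⁻¹ = 1 := by
    rw [← hWW, ← Matrix.mul_assoc W⁻¹ W W, hWl, Matrix.one_mul, hWr]
  have hmidX : X⁻¹ * T * X⁻¹ = 1 := by
    rw [← hXX, ← Matrix.mul_assoc X⁻¹ X X, hXl, Matrix.one_mul, hXr]
  refine ⟨W⁻¹ * P, X⁻¹ * Q, σ, ?_, ?_, hσa, hσn, ?_⟩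
  · rw [Matrix.transpose_mul, hWinvT]
    have h : Pᵀ * W⁻¹ * S * (W⁻¹ * P) = Pᵀ * (W⁻¹ * S * W⁻¹) * P := by
      simp only [Matrix.mul_assoc]
    rw [h, hmidW, Matrix.mul_one, hPtP]
  · rw [Matrix.transpose_mul, hXinvT]
    have h : Qᵀ * X⁻¹ * T * (X⁻¹ * Q) = Qᵀ * (X⁻¹ * T * X⁻¹) * Q := by
      simp only [Matrix.mul_assoc]
    rw [h, hmidX, Matrix.mul_one, hQtQ]
  · have hA : A = W⁻¹ * (W * A * X⁻¹) * X := by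
      calc A = (W⁻¹ * W) * A * (X⁻¹ * X) := by
            rw [hWl, hXl, Matrix.one_mul, Matrix.mul_one]
        _ = W⁻¹ * (W * A * X⁻¹) * X := by simp only [Matrix.mul_assoc]
    rw [Matrix.transpose_mul, hXinvT, ← hXX]
    rw [hA, hB]
    simp only [Matrix.mul_assoc]
    rw [← Matrix.mul_assoc X⁻¹ X X, hXl, Matrix.one_mul]
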